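/- arXiv:2307.00542 — 2 statements merged into one kernel-verified Lean document; each statement's English description precedes it below -/
import Mathlib

section
/- Let α_p^{(n)} be the power-series coefficients of [ξ(x)]^n where ξ(x) = 1 − √(1 − x), and let φ(n) denote the greatest integer less than or equal to √n + 1. Then there exists a constant c > 0 such that for all n ∈ ℕ with n ≥ 1 and all integers v, w with 0 ≤ v, w < n, the inequality (1/φ(n)) Σ_{0 ≤ j < φ(n)} α_{v+j}^{(j)} α_{w+j}^{(j)} ≥ c / n² holds. -/
/-- The coefficients `α_p^{(n)}` of the power series of `(1 - √(1-x))^n`: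
`α_p^{(n)} = 0` for `p < n` and
`α_p^{(n)} = (n/(2p)) · 2^{n+1-2p} · C(2p-n-1, p-1)` for `p ≥ n` (with `n ≥ 1`);
by convention `α_0^{(0)} = 1` and `α_p^{(0)} = 0` for `p ≥ 1`. -/
noncomputable def alph (n p : ℕ) : ℝ :=
  if n = 0 then (if p = 0 then 1 else 0)
  else if p < n then 0
  else ((n : ℝ) / (2 * p)) * (2 : ℝ) ^ ((n : ℤ) + 1 - 2 * (p : ℤ)) *
    (Nat.choose (2 * p - n - 1) (p - 1) : ℝ)

/-- `φ(n)` is the greatest integer less than or equal to `√n + 1`,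
i.e. `⌊√n⌋ + 1`. -/
def phi (n : ℕ) : ℕ := Nat.sqrt n + 1

lemma alph_nonneg (n p : ℕ) : 0 ≤ alph n p := by
  unfold alph
  split_ifs <;> positivity

lemma sqrt_helper {a b c d : ℝ} (ha : 0 ≤ a) (hc : 0 ≤ c)
    (h : a ^ 2 * b ≤ c ^ 2 * d) (hb : 0 ≤ b) :
    a * Real.sqrt b ≤ c * Real.sqrt d := by
  have h1 : a * Real.sqrt b = Real.sqrt (a ^ 2 * b) := by
    rw [Real.sqrt_mul (by positivity), Real.sqrt_sq ha]
  have h2 : c * Real.sqrt d = Real.sqrt (c ^ 2 * d) := by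
    rw [Real.sqrt_mul (by positivity), Real.sqrt_sq hc]
  rw [h1, h2]
  exact Real.sqrt_le_sqrt h

lemma cb_sqrt : ∀ v : ℕ, 1 ≤ v →
    (4 : ℝ) ^ v ≤ 2 * Real.sqrt v * (Nat.centralBinom v : ℝ) := by
  intro v hv
  induction v, hv using Nat.le_induction with
  | base =>
    have : Nat.centralBinom 1 = 2 := by decide
    rw [this]
    norm_num [Real.sqrt_one]
  | succ v hv ih =>
    have hCB : ((v : ℝ) + 1) * (Nat.centralBinom (v + 1) : ℝ)
        = 2 * (2 * v + 1) * (Nat.centralBinom v : ℝ) := by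
      exact_mod_cast congrArg (Nat.cast : ℕ → ℝ) (Nat.succ_mul_centralBinom_succ v)
    have hv1 : (1 : ℝ) ≤ (v : ℝ) := by exact_mod_cast hv
    set X := Real.sqrt (v : ℝ) with hX
    have hXnn : 0 ≤ X := Real.sqrt_nonneg _
    have hkey : 2 * ((v : ℝ) + 1) * X ≤ (2 * v + 1) * Real.sqrt ((v : ℝ) + 1) := by
      apply sqrt_helper (by positivity) (by positivity) _ (by positivity)
      nlinarith
    have hBnn : (0 : ℝ) ≤ (Nat.centralBinom v : ℝ) := by positivity
    have hcast : ((v + 1 : ℕ) : ℝ) = (v : ℝ) + 1 := by push_cast; ring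
    have hmul : (4 : ℝ) ^ (v + 1) * ((v : ℝ) + 1)
        ≤ 2 * Real.sqrt ((v + 1 : ℕ) : ℝ) * (Nat.centralBinom (v + 1) : ℝ) * ((v : ℝ) + 1) := by
      rw [hcast]
      calc (4 : ℝ) ^ (v + 1) * ((v : ℝ) + 1) = 4 * ((v : ℝ) + 1) * 4 ^ v := by ring
        _ ≤ 4 * ((v : ℝ) + 1) * (2 * X * Nat.centralBinom v) := by
            apply mul_le_mul_of_nonneg_left ih (by positivity)
        _ = (2 * ((v : ℝ) + 1) * X) * (4 * Nat.centralBinom v) := by ring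
        _ ≤ ((2 * v + 1) * Real.sqrt ((v : ℝ) + 1)) * (4 * Nat.centralBinom v) := by
            apply mul_le_mul_of_nonneg_right hkey (by positivity)
        _ = 2 * Real.sqrt ((v : ℝ) + 1) * (2 * (2 * v + 1) * Nat.centralBinom v) := by ring
        _ = 2 * Real.sqrt ((v : ℝ) + 1) * (((v : ℝ) + 1) * Nat.centralBinom (v + 1)) := by
            rw [hCB]
        _ = 2 * Real.sqrt ((v : ℝ) + 1) * (Nat.centralBinom (v + 1) : ℝ) * ((v : ℝ) + 1) := by
            ring
    exact le_of_mul_le_mul_right hmul (by positivity)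

lemma prodA (v : ℕ) (hv : 1 ≤ v) : ∀ j : ℕ, 1 ≤ j →
    (Nat.centralBinom v : ℝ) * (4 * v - (j : ℝ) * ((j : ℝ) - 1)) * 2 ^ (j - 1) ≤
      4 * (v : ℝ) * (Nat.choose (2 * v + j - 1) v : ℝ) := by
  intro j hj
  induction j, hj using Nat.le_induction with
  | base =>
    have h1 : 2 * v + 1 - 1 = 2 * v := by omega
    rw [h1]
    have h2 : (Nat.choose (2 * v) v : ℝ) = (Nat.centralBinom v : ℝ) := by
      rw [Nat.centralBinom]
    rw [h2]
    simp only [Nat.sub_self, pow_zero, Nat.cast_one]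
    exact le_of_eq (by ring)
  | succ j hj ih =>
    have hjR : (1 : ℝ) ≤ (j : ℝ) := by exact_mod_cast hj
    have hvR : (1 : ℝ) ≤ (v : ℝ) := by exact_mod_cast hv
    have hch : (Nat.choose (2 * v + j) v : ℝ) * ((v : ℝ) + j)
        = (Nat.choose (2 * v + j - 1) v : ℝ) * (2 * (v : ℝ) + j) := by
      have h0 : 2 * v + j - 1 + 1 = 2 * v + j := by omega
      have h1 := Nat.choose_mul_succ_eq (2 * v + j - 1) v
      rw [h0] at h1
      have h2 : 2 * v + j - v = v + j := by omega
      rw [h2] at h1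
      -- h1 : (2*v+j-1).choose v * (2*v+j) = (2*v+j).choose v * (v+j)
      exact_mod_cast h1.symm
    have hidx : 2 * v + (j + 1) - 1 = 2 * v + j := by omega
    rw [hidx]
    have hvj : (0 : ℝ) < (v : ℝ) + j := by positivity
    apply le_of_mul_le_mul_right _ hvj
    have hPexp : ((2 : ℝ)) ^ (j + 1 - 1) = 2 ^ (j - 1) * 2 := by
      rw [← pow_succ]
      congr 1
      omega
    have hcast : ((j + 1 : ℕ) : ℝ) = (j : ℝ) + 1 := by push_cast; ring
    have hpoly : (4 * (v : ℝ) - ((j : ℝ) + 1) * ((j : ℝ) + 1 - 1)) * (2 * ((v : ℝ) + j))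
        ≤ (4 * (v : ℝ) - (j : ℝ) * ((j : ℝ) - 1)) * (2 * (v : ℝ) + j) := by
      nlinarith [sq_nonneg (j : ℝ), hjR]
    have hBnn : (0 : ℝ) ≤ (Nat.centralBinom v : ℝ) := by positivity
    calc (Nat.centralBinom v : ℝ) * (4 * v - ((j + 1 : ℕ) : ℝ) * (((j + 1 : ℕ) : ℝ) - 1))
          * 2 ^ (j + 1 - 1) * ((v : ℝ) + j)
        = ((Nat.centralBinom v : ℝ) * 2 ^ (j - 1)) *
            ((4 * (v : ℝ) - ((j : ℝ) + 1) * ((j : ℝ) + 1 - 1)) * (2 * ((v : ℝ) + j))) := by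
          rw [hPexp, hcast]; ring
      _ ≤ ((Nat.centralBinom v : ℝ) * 2 ^ (j - 1)) *
            ((4 * (v : ℝ) - (j : ℝ) * ((j : ℝ) - 1)) * (2 * (v : ℝ) + j)) := by
          apply mul_le_mul_of_nonneg_left hpoly (by positivity)
      _ = ((Nat.centralBinom v : ℝ) * (4 * v - (j : ℝ) * ((j : ℝ) - 1)) * 2 ^ (j - 1)) *
            (2 * (v : ℝ) + j) := by ring
      _ ≤ (4 * (v : ℝ) * (Nat.choose (2 * v + j - 1) v : ℝ)) * (2 * (v : ℝ) + j) := by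
          apply mul_le_mul_of_nonneg_right ih (by positivity)
      _ = 4 * (v : ℝ) * ((Nat.choose (2 * v + j - 1) v : ℝ) * (2 * (v : ℝ) + j)) := by ring
      _ = 4 * (v : ℝ) * ((Nat.choose (2 * v + j) v : ℝ) * ((v : ℝ) + j)) := by rw [← hch]
      _ = 4 * (v : ℝ) * (Nat.choose (2 * v + j) v : ℝ) * ((v : ℝ) + j) := by ring

lemma alph_lb (v j : ℕ) (hv : 1 ≤ v) (hj : 1 ≤ j) (hj2 : j ^ 2 ≤ 2 * v) :
    (j : ℝ) ≤ 24 * (v : ℝ) * Real.sqrt v * alph j (v + j) := by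
  have hjne : j ≠ 0 := by omega
  have hnlt : ¬ (v + j < j) := by omega
  rw [alph, if_neg hjne, if_neg hnlt]
  have hidx : 2 * (v + j) - j - 1 = 2 * v + j - 1 := by omega
  rw [hidx]
  have hsym : Nat.choose (2 * v + j - 1) (v + j - 1) = Nat.choose (2 * v + j - 1) v := by
    rw [← Nat.choose_symm (show v + j - 1 ≤ 2 * v + j - 1 by omega)]
    congr 1
    omega
  rw [hsym]
  have h2e : (2 : ℝ) ^ ((j : ℤ) + 1 - 2 * ((v + j : ℕ) : ℤ)) =
      2 / ((2 : ℝ) ^ j * 4 ^ v) := by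
    rw [show (j : ℤ) + 1 - 2 * ((v + j : ℕ) : ℤ) = 1 - (j : ℤ) - (2 * v : ℕ) by
      push_cast; ring]
    rw [zpow_sub₀ (two_ne_zero), zpow_sub₀ (two_ne_zero), zpow_one, zpow_natCast,
      zpow_natCast, pow_mul]
    norm_num
    rw [div_div]
  rw [h2e]
  set X := Real.sqrt (v : ℝ) with hX
  set B := (Nat.centralBinom v : ℝ) with hB
  set C := (Nat.choose (2 * v + j - 1) v : ℝ) with hC
  set P := (2 : ℝ) ^ j with hP
  set F := (4 : ℝ) ^ v with hF
  have hvR : (1 : ℝ) ≤ (v : ℝ) := by exact_mod_cast hv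
  have hjR : (1 : ℝ) ≤ (j : ℝ) := by exact_mod_cast hj
  have hj2R : (j : ℝ) ^ 2 ≤ 2 * v := by exact_mod_cast hj2
  have hXnn : 0 ≤ X := Real.sqrt_nonneg _
  have hBnn : (0 : ℝ) ≤ B := by positivity
  have hCnn : (0 : ℝ) ≤ C := by positivity
  have hPpos : (0 : ℝ) < P := by positivity
  have hFpos : (0 : ℝ) < F := by positivity
  -- B * P ≤ 4 * C
  have hBP : B * P ≤ 4 * C := by
    have h2v : 2 * (v : ℝ) ≤ 4 * v - (j : ℝ) * ((j : ℝ) - 1) := by nlinarith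
    have hPh : (2 : ℝ) ^ (j - 1) * 2 = P := by
      rw [hP, ← pow_succ]
      congr 1
      omega
    have step1 : B * (2 * (v : ℝ)) * 2 ^ (j - 1) ≤ 4 * (v : ℝ) * C := by
      calc B * (2 * (v : ℝ)) * 2 ^ (j - 1)
          ≤ B * (4 * v - (j : ℝ) * ((j : ℝ) - 1)) * 2 ^ (j - 1) := by
            apply mul_le_mul_of_nonneg_right
              (mul_le_mul_of_nonneg_left h2v hBnn) (by positivity)
        _ ≤ 4 * (v : ℝ) * C := prodA v hv j hj
    have step2 : B * P * (v : ℝ) ≤ 4 * C * (v : ℝ) := by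
      calc B * P * (v : ℝ) = B * (2 * (v : ℝ)) * 2 ^ (j - 1) * 2 / 2 := by
            rw [← hPh]; ring
        _ = B * (2 * (v : ℝ)) * 2 ^ (j - 1) := by ring
        _ ≤ 4 * (v : ℝ) * C := step1
        _ = 4 * C * (v : ℝ) := by ring
    exact le_of_mul_le_mul_right step2 (by positivity)
  have hFB : F ≤ 2 * X * B := cb_sqrt v hv
  have hvj3 : (v : ℝ) + j ≤ 3 * v := by
    have : j ≤ 2 * v := by nlinarith [hj2, hj]
    have : (j : ℝ) ≤ 2 * v := by exact_mod_cast this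
    linarith
  have hrw : 24 * (v : ℝ) * X * ((j : ℝ) / (2 * ((v + j : ℕ) : ℝ)) * (2 / (P * F)) * C)
      = 24 * (v : ℝ) * X * (j : ℝ) * C / ((((v : ℝ) + j)) * (P * F)) := by
    push_cast
    field_simp
  have hden : (0 : ℝ) < ((v : ℝ) + j) * (P * F) :=
    mul_pos (by positivity) (mul_pos hPpos hFpos)
  rw [hrw, le_div_iff₀ hden]
  calc (j : ℝ) * (((v : ℝ) + j) * (P * F))
      = ((j : ℝ) * ((v : ℝ) + j) * P) * F := by ring
    _ ≤ ((j : ℝ) * ((v : ℝ) + j) * P) * (2 * X * B) := by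
        apply mul_le_mul_of_nonneg_left hFB (by positivity)
    _ = (2 * X * (j : ℝ) * ((v : ℝ) + j)) * (B * P) := by ring
    _ ≤ (2 * X * (j : ℝ) * ((v : ℝ) + j)) * (4 * C) := by
        apply mul_le_mul_of_nonneg_left hBP (by positivity)
    _ = (8 * X * (j : ℝ) * C) * ((v : ℝ) + j) := by ring
    _ ≤ (8 * X * (j : ℝ) * C) * (3 * v) := by
        apply mul_le_mul_of_nonneg_left hvj3 (by positivity)
    _ = 24 * (v : ℝ) * X * (j : ℝ) * C := by ring

lemma sumsq : ∀ s : ℕ, s ^ 3 ≤ 3 * ∑ j ∈ Finset.Icc 1 s, j ^ 2 := by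
  intro s
  induction s with
  | zero => simp
  | succ s ih =>
    rw [Finset.sum_Icc_succ_top (by omega)]
    have e : (s + 1) ^ 3 = s ^ 3 + 3 * s ^ 2 + 3 * s + 1 := by ring
    have e2 : (s + 1) ^ 2 = s ^ 2 + 2 * s + 1 := by ring
    rw [e, e2]
    linarith [ih]

lemma nat_sqrt_le_real (n : ℕ) : (Nat.sqrt n : ℝ) ≤ Real.sqrt n := by
  rw [Real.le_sqrt (by positivity) (by positivity)]
  exact_mod_cast Nat.sqrt_le' n

lemma main_aux (n v w : ℕ) (hv : 1 ≤ v) (hvw : v ≤ w) (hwn : w < n) :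
    (1 / 100000 : ℝ) * (phi n : ℝ) ≤
      (∑ j ∈ Finset.range (phi n), alph j (v + j) * alph j (w + j)) * (n : ℝ) ^ 2 := by
  have hn : 1 ≤ n := by omega
  set s := Nat.sqrt v with hs
  have hs1 : 1 ≤ s := Nat.sqrt_pos.2 hv
  have hssq : s ^ 2 ≤ v := Nat.sqrt_le' v
  have hv3 : v ≤ 3 * s ^ 2 := by
    have h := Nat.lt_succ_sqrt' v
    rw [← hs] at h
    nlinarith [hs1]
  set X := Real.sqrt (v : ℝ) with hX
  set Y := Real.sqrt (w : ℝ) with hY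
  set Z := Real.sqrt (n : ℝ) with hZ
  have hXnn : 0 ≤ X := Real.sqrt_nonneg _
  have hYnn : 0 ≤ Y := Real.sqrt_nonneg _
  have hZnn : 0 ≤ Z := Real.sqrt_nonneg _
  have hvR : (1 : ℝ) ≤ (v : ℝ) := by exact_mod_cast hv
  have hwR : (1 : ℝ) ≤ (w : ℝ) := by exact_mod_cast le_trans hv hvw
  have hwnR : (w : ℝ) ≤ (n : ℝ) := by exact_mod_cast le_of_lt hwn
  have hX2s : X ≤ 2 * (s : ℝ) := by
    have hb : (v : ℝ) ≤ (2 * (s : ℝ)) ^ 2 := by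
      have : (v : ℝ) ≤ 3 * (s : ℝ) ^ 2 := by exact_mod_cast hv3
      nlinarith [this]
    calc X ≤ Real.sqrt ((2 * (s : ℝ)) ^ 2) := Real.sqrt_le_sqrt hb
      _ = 2 * (s : ℝ) := Real.sqrt_sq (by positivity)
  have hYZ : Y ≤ Z := Real.sqrt_le_sqrt hwnR
  have hZZ : Z * Z = (n : ℝ) := Real.mul_self_sqrt (by positivity)
  have hZ1 : (1 : ℝ) ≤ Z := by
    rw [show (1 : ℝ) = Real.sqrt 1 from (Real.sqrt_one).symm]
    exact Real.sqrt_le_sqrt (by exact_mod_cast hn)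
  have hphi : (phi n : ℝ) ≤ 2 * Z := by
    have h1 : (Nat.sqrt n : ℝ) ≤ Z := nat_sqrt_le_real n
    have h2 : (phi n : ℝ) = (Nat.sqrt n : ℝ) + 1 := by rw [phi]; push_cast; ring
    linarith
  set S := ∑ j ∈ Finset.range (phi n), alph j (v + j) * alph j (w + j) with hSdef
  have hSnn : 0 ≤ S :=
    Finset.sum_nonneg fun j _ => mul_nonneg (alph_nonneg _ _) (alph_nonneg _ _)
  have hsub : Finset.Icc 1 s ⊆ Finset.range (phi n) := by
    intro j hj
    simp only [Finset.mem_Icc] at hj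
    simp only [Finset.mem_range, phi]
    have : s ≤ Nat.sqrt n := Nat.sqrt_le_sqrt (by omega)
    omega
  have hterm : ∀ j ∈ Finset.Icc 1 s,
      ((j : ℝ)) ^ 2 ≤ 576 * ((v : ℝ) * w * X * Y) * (alph j (v + j) * alph j (w + j)) := by
    intro j hj
    simp only [Finset.mem_Icc] at hj
    have hjs : j ^ 2 ≤ s ^ 2 := Nat.pow_le_pow_left hj.2 2
    have h1 : (j : ℝ) ≤ 24 * (v : ℝ) * X * alph j (v + j) :=
      alph_lb v j hv hj.1 (le_trans (le_trans hjs hssq) (by omega))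
    have h2 : (j : ℝ) ≤ 24 * (w : ℝ) * Y * alph j (w + j) :=
      alph_lb w j (le_trans hv hvw) hj.1 (le_trans (le_trans hjs hssq) (by omega))
    have h3 := mul_le_mul h1 h2 (by positivity)
      (mul_nonneg (by positivity) (alph_nonneg _ _))
    nlinarith [h3]
  have hQ : ((s : ℝ)) ^ 3 ≤ 3 * ∑ j ∈ Finset.Icc 1 s, ((j : ℝ)) ^ 2 := by
    exact_mod_cast sumsq s
  have hQS : ∑ j ∈ Finset.Icc 1 s, ((j : ℝ)) ^ 2 ≤ 576 * ((v : ℝ) * w * X * Y) * S := by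
    calc ∑ j ∈ Finset.Icc 1 s, ((j : ℝ)) ^ 2
        ≤ ∑ j ∈ Finset.Icc 1 s,
            576 * ((v : ℝ) * w * X * Y) * (alph j (v + j) * alph j (w + j)) :=
          Finset.sum_le_sum hterm
      _ = 576 * ((v : ℝ) * w * X * Y) *
            ∑ j ∈ Finset.Icc 1 s, alph j (v + j) * alph j (w + j) := by
          rw [← Finset.mul_sum]
      _ ≤ 576 * ((v : ℝ) * w * X * Y) * S := by
          apply mul_le_mul_of_nonneg_left _ (by positivity)
          exact Finset.sum_le_sum_of_subset_of_nonneg hsub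
            (fun j _ _ => mul_nonneg (alph_nonneg _ _) (alph_nonneg _ _))
  have hsS : ((s : ℝ)) ^ 3 ≤ 1728 * ((v : ℝ) * w * X * Y) * S := by linarith
  have hA1 : (v : ℝ) * X ≤ 6 * (s : ℝ) ^ 3 := by
    have hv3' : (v : ℝ) ≤ 3 * (s : ℝ) ^ 2 := by exact_mod_cast hv3
    calc (v : ℝ) * X ≤ (3 * (s : ℝ) ^ 2) * (2 * (s : ℝ)) :=
          mul_le_mul hv3' hX2s hXnn (by positivity)
      _ = 6 * (s : ℝ) ^ 3 := by ring
  have hA2 : (w : ℝ) * Y ≤ (n : ℝ) * Z := mul_le_mul hwnR hYZ hYnn (by positivity)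
  have hD : (0 : ℝ) < 1728 * ((v : ℝ) * w * X * Y) := by
    have hX1 : (1 : ℝ) ≤ X := by
      rw [show (1 : ℝ) = Real.sqrt 1 from (Real.sqrt_one).symm]
      exact Real.sqrt_le_sqrt hvR
    have hY1 : (1 : ℝ) ≤ Y := by
      rw [show (1 : ℝ) = Real.sqrt 1 from (Real.sqrt_one).symm]
      exact Real.sqrt_le_sqrt hwR
    nlinarith
  apply le_of_mul_le_mul_right _ hD
  calc (1 / 100000 : ℝ) * (phi n : ℝ) * (1728 * ((v : ℝ) * w * X * Y))
      ≤ (1 / 100000 : ℝ) * (2 * Z) * (1728 * ((v : ℝ) * w * X * Y)) := by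
        apply mul_le_mul_of_nonneg_right
          (mul_le_mul_of_nonneg_left hphi (by norm_num)) (le_of_lt hD)
    _ = (3456 / 100000 : ℝ) * (((v : ℝ) * X) * (((w : ℝ) * Y) * Z)) := by ring
    _ ≤ (3456 / 100000 : ℝ) * ((6 * (s : ℝ) ^ 3) * (((n : ℝ) * Z) * Z)) := by
        apply mul_le_mul_of_nonneg_left _ (by norm_num)
        exact mul_le_mul hA1 (mul_le_mul_of_nonneg_right hA2 hZnn) (by positivity)
          (by positivity)
    _ = (20736 / 100000 : ℝ) * ((s : ℝ) ^ 3 * ((n : ℝ) * (Z * Z))) := by ring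
    _ = (20736 / 100000 : ℝ) * ((s : ℝ) ^ 3 * ((n : ℝ) * (n : ℝ))) := by rw [hZZ]
    _ ≤ 1 * ((s : ℝ) ^ 3 * ((n : ℝ) * (n : ℝ))) := by
        apply mul_le_mul_of_nonneg_right (by norm_num) (by positivity)
    _ = (s : ℝ) ^ 3 * (n : ℝ) ^ 2 := by ring
    _ ≤ (1728 * ((v : ℝ) * w * X * Y) * S) * (n : ℝ) ^ 2 := by
        apply mul_le_mul_of_nonneg_right hsS (by positivity)
    _ = S * (n : ℝ) ^ 2 * (1728 * ((v : ℝ) * w * X * Y)) := by ring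


lemma aux_zero (n w : ℕ) (hn : 1 ≤ n) (hw : 1 ≤ w) (hwn : w < n) :
    (1 / 100000 : ℝ) * (phi n : ℝ) ≤
      (∑ j ∈ Finset.range (phi n), alph j (0 + j) * alph j (w + j)) * (n : ℝ) ^ 2 := by
  set Y := Real.sqrt (w : ℝ) with hY
  set Z := Real.sqrt (n : ℝ) with hZ
  have hwR : (1 : ℝ) ≤ (w : ℝ) := by exact_mod_cast hw
  have hwnR : (w : ℝ) ≤ (n : ℝ) := by exact_mod_cast le_of_lt hwn
  have hYnn : 0 ≤ Y := Real.sqrt_nonneg _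
  have hZnn : 0 ≤ Z := Real.sqrt_nonneg _
  have hY1 : (1 : ℝ) ≤ Y := by
    rw [show (1 : ℝ) = Real.sqrt 1 from (Real.sqrt_one).symm]
    exact Real.sqrt_le_sqrt hwR
  have hYZ : Y ≤ Z := Real.sqrt_le_sqrt hwnR
  have hZZ : Z * Z = (n : ℝ) := Real.mul_self_sqrt (by positivity)
  have hphi : (phi n : ℝ) ≤ 2 * Z := by
    have h1 : (Nat.sqrt n : ℝ) ≤ Z := nat_sqrt_le_real n
    have hZ1 : (1 : ℝ) ≤ Z := by
      rw [show (1 : ℝ) = Real.sqrt 1 from (Real.sqrt_one).symm]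
      exact Real.sqrt_le_sqrt (by exact_mod_cast hn)
    have h2 : (phi n : ℝ) = (Nat.sqrt n : ℝ) + 1 := by rw [phi]; push_cast; ring
    linarith
  set S := ∑ j ∈ Finset.range (phi n), alph j (0 + j) * alph j (w + j) with hSdef
  have h1mem : (1 : ℕ) ∈ Finset.range (phi n) := by
    simp only [Finset.mem_range, phi]
    have := Nat.sqrt_pos.2 (show 0 < n by omega)
    omega
  have haw : (1 : ℝ) ≤ 24 * (w : ℝ) * Y * alph 1 (w + 1) := by
    have h := alph_lb w 1 hw le_rfl (by omega)
    simpa using h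
  have ha11 : alph 1 (0 + 1) = 1 / 2 := by
    rw [alph]
    norm_num
  have hfS : alph 1 (0 + 1) * alph 1 (w + 1) ≤ S := by
    have h := Finset.single_le_sum
      (f := fun j => alph j (0 + j) * alph j (w + j))
      (fun i _ => mul_nonneg (alph_nonneg _ _) (alph_nonneg _ _)) h1mem
    rw [← hSdef] at h
    exact h
  rw [ha11] at hfS
  have hawnn : 0 ≤ alph 1 (w + 1) := alph_nonneg _ _
  have hD : (0 : ℝ) < 48 * (w : ℝ) * Y := by nlinarith
  apply le_of_mul_le_mul_right _ hD
  calc (1 / 100000 : ℝ) * (phi n : ℝ) * (48 * (w : ℝ) * Y)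
      ≤ (1 / 100000 : ℝ) * (2 * Z) * (48 * (w : ℝ) * Y) := by
        apply mul_le_mul_of_nonneg_right
          (mul_le_mul_of_nonneg_left hphi (by norm_num)) (le_of_lt hD)
    _ = (96 / 100000 : ℝ) * (((w : ℝ) * Y) * Z) := by ring
    _ ≤ (96 / 100000 : ℝ) * (((n : ℝ) * Z) * Z) := by
        apply mul_le_mul_of_nonneg_left
          (mul_le_mul_of_nonneg_right (mul_le_mul hwnR hYZ hYnn (by positivity)) hZnn)
          (by norm_num)
    _ = (96 / 100000 : ℝ) * ((n : ℝ) * (Z * Z)) := by ring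
    _ = (96 / 100000 : ℝ) * ((n : ℝ) * (n : ℝ)) := by rw [hZZ]
    _ ≤ 1 * ((n : ℝ) * (n : ℝ)) := by
        apply mul_le_mul_of_nonneg_right (by norm_num) (by positivity)
    _ = (n : ℝ) ^ 2 * 1 := by ring
    _ ≤ (n : ℝ) ^ 2 * (24 * (w : ℝ) * Y * alph 1 (w + 1)) := by
        apply mul_le_mul_of_nonneg_left haw (by positivity)
    _ = (1 / 2 * alph 1 (w + 1)) * (n : ℝ) ^ 2 * (48 * (w : ℝ) * Y) := by ring
    _ ≤ S * (n : ℝ) ^ 2 * (48 * (w : ℝ) * Y) := by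
        apply mul_le_mul_of_nonneg_right
          (mul_le_mul_of_nonneg_right hfS (by positivity)) (le_of_lt hD)

/-- There exists `c > 0` such that for all `n ≥ 1` and all `0 ≤ v, w < n`,
`(1/φ(n)) Σ_{0 ≤ j < φ(n)} α_{v+j}^{(j)} α_{w+j}^{(j)} ≥ c / n²`. -/
theorem stmt2 :
    ∃ c : ℝ, 0 < c ∧ ∀ n : ℕ, 1 ≤ n → ∀ v w : ℕ, v < n → w < n →
      c / (n : ℝ) ^ 2 ≤
        (1 / (phi n : ℝ)) * ∑ j ∈ Finset.range (phi n), alph j (v + j) * alph j (w + j) := by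
  refine ⟨1 / 100000, by norm_num, ?_⟩
  intro n hn v w hvn hwn
  have hnR : (0 : ℝ) < (n : ℝ) := by exact_mod_cast hn
  have hn2 : (0 : ℝ) < (n : ℝ) ^ 2 := by positivity
  have hφpos : (0 : ℝ) < (phi n : ℝ) := by
    have : 0 < phi n := Nat.succ_pos _
    exact_mod_cast this
  set S := ∑ j ∈ Finset.range (phi n), alph j (v + j) * alph j (w + j) with hSdef
  rw [div_le_iff₀ hn2, show 1 / (phi n : ℝ) * S * (n : ℝ) ^ 2 = S * (n : ℝ) ^ 2 / (phi n : ℝ)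
    by ring, le_div_iff₀ hφpos]
  rcases Nat.eq_zero_or_pos v with hv0 | hv1
  · rcases Nat.eq_zero_or_pos w with hw0 | hw1
    · -- v = 0, w = 0 : the j = 0 term equals 1
      subst hv0; subst hw0
      have h0 : (0 : ℕ) ∈ Finset.range (phi n) := by simp [phi]
      have hf : (1 : ℝ) ≤ S := by
        have h := Finset.single_le_sum
          (f := fun j => alph j (0 + j) * alph j (0 + j))
          (fun i _ => mul_nonneg (alph_nonneg _ _) (alph_nonneg _ _)) h0
        rw [← hSdef] at h
        have ha : alph 0 (0 + 0) = 1 := by simp [alph]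
        have h' : alph 0 (0 + 0) * alph 0 (0 + 0) ≤ S := h
        rw [ha] at h'
        linarith
      have hφn : (phi n : ℝ) ≤ 2 * (n : ℝ) ^ 2 := by
        have h1 : phi n ≤ 2 * n ^ 2 := by
          have := Nat.sqrt_le_self n
          simp only [phi]
          nlinarith [hn]
        exact_mod_cast h1
      nlinarith [hf, hn2, hφn]
    · -- v = 0, w ≥ 1 : use the j = 1 term
      subst hv0
      rw [hSdef]
      exact aux_zero n w hn hw1 hwn
  · rcases Nat.eq_zero_or_pos w with hw0 | hw1
    · subst hw0
      have hsymm : S = ∑ j ∈ Finset.range (phi n), alph j (0 + j) * alph j (v + j) :=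
        Finset.sum_congr rfl fun j _ => mul_comm _ _
      rw [hsymm]
      exact aux_zero n v hn hv1 hvn
    · rcases le_total v w with h | h
      · exact main_aux n v w hv1 h hwn
      · have hsymm : S = ∑ j ∈ Finset.range (phi n), alph j (w + j) * alph j (v + j) :=
          Finset.sum_congr rfl fun j _ => mul_comm _ _
        rw [hsymm]
        exact main_aux n w v hw1 h hvn
end

section
/- Let F_r be the free group on r ≥ 1 generators and let ℝ[F_r] be its real group algebra. For n ∈ ℕ define s_n = (1/|W_n|) Σ_{a ∈ W_n} a ∈ ℝ[F_r], where W_n is the set of elements of F_r of reduced word length n. Then the elements s_n pairwise commute: s_m · s_n = s_n · s_m for all m, n ∈ ℕ. -/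
/-- The normalized sum `s_n = (1/|W_n|) Σ_{a ∈ W_n} a` in the real group algebra
of the free group on `r` generators, where `W_n` is the (finite) set of elements
of reduced word length `n`. -/
noncomputable def sph (r n : ℕ) : MonoidAlgebra ℝ (FreeGroup (Fin r)) :=
  (({g : FreeGroup (Fin r) | g.toWord.length = n}).ncard : ℝ)⁻¹ •
    ∑ᶠ a ∈ {g : FreeGroup (Fin r) | g.toWord.length = n},
      MonoidAlgebra.of ℝ (FreeGroup (Fin r)) a

/-!
Let `A n` be the sum of all elements of length `n`. Left multiplication by a letter `ℓ` either
prepends `ℓ` to a reduced word or cancels its first letter `ℓ⁻¹`. Hence `A 1 * A (n + 1)`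
collects every word of length `n + 2` once and every word of length `n` once for each letter
it does not start with. This gives `A 1 * A 1 = A 2 + 2r` and
`A 1 * A (n + 2) = A (n + 3) + (2r - 1) A (n + 1)`, so every `A n` is a polynomial in `A 1`;
these commute, and `s n` is a scalar multiple of `A n`.
-/

open Finset

namespace FreeGroup

variable {α : Type*} [DecidableEq α]

theorem toWord_mk_singleton_mul (ℓ : α × Bool) (g : FreeGroup α) :
    (mk [ℓ] * g).toWord =
      if g.toWord.head? = some (ℓ.1, !ℓ.2) then g.toWord.tail else ℓ :: g.toWord := by
  rw [toWord_mul, toWord_mk, reduce_singleton, List.singleton_append, reduce.cons,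
    reduce_toWord]
  obtain ⟨a, b⟩ := ℓ
  rcases g.toWord with _ | ⟨⟨c, d⟩, t⟩
  · rfl
  · cases b <;> cases d <;> by_cases h : a = c <;> simp [h, eq_comm]

theorem norm_mk_singleton_mul (ℓ : α × Bool) (g : FreeGroup α) :
    norm (mk [ℓ] * g) =
      if g.toWord.head? = some (ℓ.1, !ℓ.2) then norm g - 1 else norm g + 1 := by
  rw [norm, toWord_mk_singleton_mul]
  split_ifs <;> simp [norm]

theorem mk_singleton_injective : Function.Injective fun ℓ : α × Bool ↦ mk [ℓ] := by
  intro a b h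
  simpa [toWord_mk] using congrArg toWord h

theorem finite_setOf_norm_eq [Finite α] (n : ℕ) : {g : FreeGroup α | norm g = n}.Finite :=
  (List.finite_length_eq (α × Bool) n).preimage toWord_injective.injOn

section Sphere

variable [Fintype α]

noncomputable def sphere (n : ℕ) : Finset (FreeGroup α) := (finite_setOf_norm_eq n).toFinset

@[simp]
theorem mem_sphere {n : ℕ} {g : FreeGroup α} : g ∈ sphere n ↔ norm g = n :=
  Set.Finite.mem_toFinset _

theorem sphere_zero : sphere 0 = ({1} : Finset (FreeGroup α)) := by
  ext g
  simp

theorem sphere_one : sphere 1 = univ.image fun ℓ : α × Bool ↦ mk [ℓ] := by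
  ext g
  simp only [mem_sphere, mem_image, mem_univ, true_and, norm, List.length_eq_one_iff]
  constructor
  · rintro ⟨ℓ, hℓ⟩
    exact ⟨ℓ, by rw [← hℓ, mk_toWord]⟩
  · rintro ⟨ℓ, rfl⟩
    exact ⟨ℓ, by rw [toWord_mk, reduce_singleton]⟩

variable {M : Type*} [AddCommMonoid M]

theorem sum_sphere_succ_fiberwise_head (n : ℕ) (f : FreeGroup α → M) :
    ∑ ℓ : α × Bool, ∑ g ∈ sphere (n + 1) with g.toWord.head? = some ℓ, f g =
      ∑ g ∈ sphere (n + 1), f g := by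
  rw [← sum_fiberwise_of_maps_to (t := univ) (g := fun g ↦ g.toWord.head?) (by simp) f,
    Fintype.sum_option, filter_false_of_mem, sum_empty, zero_add]
  intro g hg
  rw [List.head?_eq_none_iff, ← List.length_eq_zero_iff]
  simp_all [norm]

theorem sum_mk_singleton_mul_sphere (ℓ : α × Bool) (n : ℕ) (f : FreeGroup α → M) :
    ∑ g ∈ sphere (n + 1), f (mk [ℓ] * g) =
      ∑ g ∈ sphere (n + 2) with g.toWord.head? = some ℓ, f g +
        ∑ g ∈ sphere n with g.toWord.head? ≠ some ℓ, f g := by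
  have inv_eq : (mk [ℓ])⁻¹ = mk [(ℓ.1, !ℓ.2)] := by rw [inv_mk]; rfl
  rw [← sum_union]
  · refine (sum_equiv (Equiv.mulLeft (mk [ℓ])⁻¹) (fun g ↦ ?_) fun _ _ ↦ by
    rw [Equiv.coe_mulLeft, mul_inv_cancel_left]).symm
    simp only [Equiv.coe_mulLeft, inv_eq, mem_union, mem_filter, mem_sphere,
      norm_mk_singleton_mul, Bool.not_not]
    by_cases h : g.toWord.head? = some ℓ <;> simp [h]
  · refine disjoint_left.2 fun g hg hg' ↦ ?_
    simp only [mem_filter, mem_sphere] at hg hg'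
    omega

section Semiring

variable (k : Type*) [Semiring k]

variable (α) in
noncomputable def sphereSum (n : ℕ) : MonoidAlgebra k (FreeGroup α) :=
  ∑ g ∈ sphere n, MonoidAlgebra.of k _ g

theorem sphereSum_zero : sphereSum α k 0 = (1 : MonoidAlgebra k (FreeGroup α)) := by
  rw [sphereSum, sphere_zero, sum_singleton, _root_.map_one]

theorem sphereSum_one_mul_sphereSum_succ (n : ℕ) :
    sphereSum α k 1 * sphereSum α k (n + 1) = sphereSum α k (n + 2) +
      ∑ ℓ : α × Bool, ∑ g ∈ sphere n with g.toWord.head? ≠ some ℓ,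
        MonoidAlgebra.of k (FreeGroup α) g := by
  rw [sphereSum, sphere_one, sum_image fun a _ b _ h ↦ mk_singleton_injective h, sum_mul]
  simp_rw [sphereSum, mul_sum, ← _root_.map_mul, sum_mk_singleton_mul_sphere]
  rw [sum_add_distrib, sum_sphere_succ_fiberwise_head]

theorem sphereSum_one_mul_self :
    sphereSum α k 1 * sphereSum α k 1 =
      sphereSum α k 2 + (2 * Fintype.card α : k) • (1 : MonoidAlgebra k (FreeGroup α)) := by
  have no_head (ℓ : α × Bool) :
      {g ∈ (sphere 0 : Finset (FreeGroup α)) | g.toWord.head? ≠ some ℓ} = {1} := by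
    rw [sphere_zero, filter_singleton, if_pos (by simp)]
  rw [sphereSum_one_mul_sphereSum_succ k 0]
  simp only [no_head, sum_singleton, _root_.map_one, sum_const, card_univ, Fintype.card_prod,
    Fintype.card_bool, Nat.mul_comm (Fintype.card α), ← Nat.cast_smul_eq_nsmul k, Nat.cast_mul,
    Nat.cast_ofNat]

end Semiring

theorem sphereSum_one_mul_sphereSum_succ_succ (k : Type*) [Ring k] (n : ℕ) :
    sphereSum α k 1 * sphereSum α k (n + 2) =
      sphereSum α k (n + 3) + (2 * Fintype.card α - 1 : k) • sphereSum α k (n + 1) := by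
  have head_ne (ℓ : α × Bool) :
      ∑ g ∈ sphere (n + 1) with g.toWord.head? ≠ some ℓ, MonoidAlgebra.of k _ g =
        sphereSum α k (n + 1) -
          ∑ g ∈ sphere (n + 1) with g.toWord.head? = some ℓ, MonoidAlgebra.of k _ g :=
    eq_sub_of_add_eq' (sum_filter_add_sum_filter_not _ _ _)
  rw [sphereSum_one_mul_sphereSum_succ, sum_congr rfl fun ℓ _ ↦ head_ne ℓ, sum_sub_distrib,
    sum_sphere_succ_fiberwise_head, ← sphereSum, sum_const, card_univ, Fintype.card_prod]
  simp [sub_smul, Nat.mul_comm (Fintype.card α), ← Nat.cast_smul_eq_nsmul k]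

section CommRing

variable (k : Type*) [CommRing k]

theorem sphereSum_mem_adjoin_sphereSum_one :
    ∀ n : ℕ, sphereSum α k n ∈ Algebra.adjoin k {sphereSum α k 1}
  | 0 => by rw [sphereSum_zero]; exact one_mem _
  | 1 => Algebra.self_mem_adjoin_singleton k _
  | 2 => by
    rw [← sub_eq_of_eq_add (sphereSum_one_mul_self k)]
    exact sub_mem (mul_mem (Algebra.self_mem_adjoin_singleton k _)
      (Algebra.self_mem_adjoin_singleton k _)) (Subalgebra.smul_mem _ (one_mem _) _)
  | n + 3 => by
    rw [← sub_eq_of_eq_add (sphereSum_one_mul_sphereSum_succ_succ k n)]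
    exact sub_mem (mul_mem (Algebra.self_mem_adjoin_singleton k _)
      (sphereSum_mem_adjoin_sphereSum_one (n + 2)))
      (Subalgebra.smul_mem _ (sphereSum_mem_adjoin_sphereSum_one (n + 1)) _)

theorem commute_sphereSum (m n : ℕ) :
    Commute (sphereSum α k m) (sphereSum α k n) :=
  Algebra.commute_of_mem_adjoin_singleton_of_commute (sphereSum_mem_adjoin_sphereSum_one k n)
    (Algebra.commute_of_mem_adjoin_self (sphereSum_mem_adjoin_sphereSum_one k m)).symm

end CommRing

end Sphere

end FreeGroup

theorem sph_eq_smul_sphereSum (r n : ℕ) :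
    sph r n = ({g : FreeGroup (Fin r) | g.toWord.length = n}.ncard : ℝ)⁻¹ •
      FreeGroup.sphereSum (Fin r) ℝ n := by
  rw [sph]
  congr 1
  exact finsum_mem_eq_finite_toFinset_sum _ (FreeGroup.finite_setOf_norm_eq n)

theorem stmt16_general (r : ℕ) :
    ∀ m n : ℕ, sph r m * sph r n = sph r n * sph r m := by
  intro m n
  rw [sph_eq_smul_sphereSum, sph_eq_smul_sphereSum]
  exact (((FreeGroup.commute_sphereSum (α := Fin r) ℝ m n).smul_left _).smul_right _).eq

/-- In the real group algebra of the free group on `r ≥ 1` generators, the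
normalized spherical sums `s_n` pairwise commute: `s_m · s_n = s_n · s_m`. -/
theorem stmt16 (r : ℕ) (hr : 1 ≤ r) :
    ∀ m n : ℕ, sph r m * sph r n = sph r n * sph r m :=
  stmt16_general r
end
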